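/- arXiv:1001.1534 — 6 statements merged into one kernel-verified Lean document; each statement's English description precedes it below -/
import Mathlib

section
/- Let f, g : ℕ → ℝ be functions with f(k) > 0 and g(k) > 0 for all k. If f is of uniform polynomial growth with exponent n_f and g is of uniform polynomial growth with exponent n_g, then the function f + g is of uniform polynomial growth with exponent max(n_f, n_g). -/
/-- A positive function `f : ℕ → ℝ` is of uniform polynomial growth with
exponent `n` if `k * (f (k+1) - f k) / f k` tends to `n` as `k → ∞`. -/
def UniformPolyGrowth (f : ℕ → ℝ) (n : ℝ) : Prop :=
  Filter.Tendsto (fun k : ℕ => (k : ℝ) * (f (k + 1) - f k) / f k) Filter.atTop (nhds n)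

/-!
Write `a_k → n_f` and `b_k → n_g` for the growth quotients of `f` and `g`. The growth quotient of
`f + g` is the convex combination `a_k + v_k (b_k - a_k)` with weight `v_k = g k / (f k + g k)`.
Say `n_g ≤ n_f`. If `n_g = n_f`, the bounded weight times `b_k - a_k → 0` vanishes in the limit.
If `n_g < n_f`, the quotient `g / f` has growth exponent `n_g - n_f < 0`, so it tends to `0`:
by `log x ≤ x - 1`, `log (g / f)` eventually decreases by at least a fixed multiple of `1 / k`
at each step, and the harmonic series diverges. Hence `v_k ≤ g k / f k → 0`.
-/

open Filter Finset Topology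

theorem tendsto_atBot_of_succ_sub_le_neg_div {s : ℕ → ℝ} {c : ℝ} (hc : 0 < c)
    (hs : ∀ᶠ k : ℕ in atTop, s (k + 1) - s k ≤ -c / k) : Tendsto s atTop atBot := by
  obtain ⟨K, hK⟩ := hs.exists_forall_of_atTop
  have harmonic : Tendsto (fun m ↦ ∑ i ∈ range m, (1 : ℝ) / (i + K : ℕ)) atTop atTop := by
    refine (not_summable_iff_tendsto_nat_atTop_of_nonneg fun i ↦ by positivity).1 ?_
    exact (summable_nat_add_iff K (f := fun n : ℕ ↦ (1 : ℝ) / n)).not.2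
      Real.not_summable_one_div_natCast
  have hbound (m : ℕ) : s (m + K) ≤ s K + -(c * ∑ i ∈ range m, (1 : ℝ) / (i + K : ℕ)) := by
    calc s (m + K) = s K + ∑ i ∈ range m, (s (i + 1 + K) - s (i + K)) := by
          rw [sum_range_sub (fun i ↦ s (i + K)) m, Nat.zero_add, add_sub_cancel]
      _ ≤ s K + ∑ i ∈ range m, -c / (i + K : ℕ) := by
          gcongr with i
          rw [Nat.add_right_comm]
          exact hK (i + K) (by omega)
      _ = s K + -(c * ∑ i ∈ range m, (1 : ℝ) / (i + K : ℕ)) := by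
          rw [mul_sum, ← sum_neg_distrib]
          congr! 2 with i
          ring
  rw [← tendsto_add_atTop_iff_nat K]
  exact tendsto_atBot_mono hbound
    (tendsto_atBot_add_const_left _ _ (tendsto_neg_atTop_atBot.comp (harmonic.const_mul_atTop hc)))

namespace UniformPolyGrowth

variable {f g : ℕ → ℝ} {nf ng : ℝ}

theorem succ_div_sub_one {k : ℕ} (hk : k ≠ 0) (hf : f k ≠ 0) :
    f (k + 1) / f k - 1 = (k : ℝ) * (f (k + 1) - f k) / f k / k := by
  field_simp

theorem tendsto_succ_div (hf : ∀ k, f k ≠ 0) (hfu : UniformPolyGrowth f nf) :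
    Tendsto (fun k ↦ f (k + 1) / f k) atTop (𝓝 1) := by
  have h := (hfu.div_atTop tendsto_natCast_atTop_atTop).const_add 1
  rw [add_zero] at h
  refine h.congr' ?_
  filter_upwards [eventually_ne_atTop 0] with k hk
  rw [← succ_div_sub_one hk (hf k)]
  ring

theorem div (hf : ∀ k, f k ≠ 0) (hg : ∀ k, g k ≠ 0) (hfu : UniformPolyGrowth f nf)
    (hgu : UniformPolyGrowth g ng) : UniformPolyGrowth (fun k ↦ g k / f k) (ng - nf) := by
  have hlim := (hgu.sub hfu).mul ((tendsto_succ_div hf hfu).inv₀ one_ne_zero)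
  rw [inv_one, mul_one] at hlim
  refine hlim.congr fun k ↦ ?_
  have := hf k; have := hf (k + 1); have := hg k
  field_simp
  ring

theorem tendsto_zero_of_neg (hf : ∀ k, 0 < f k) (hfu : UniformPolyGrowth f nf) (hn : nf < 0) :
    Tendsto f atTop (𝓝 0) := by
  have hlog : Tendsto (fun k ↦ Real.log (f k)) atTop atBot := by
    refine tendsto_atBot_of_succ_sub_le_neg_div (c := -nf / 2) (by linarith) ?_
    filter_upwards [hfu.eventually (eventually_le_nhds (show nf < nf / 2 by linarith)),
      eventually_ne_atTop 0] with k hk hk0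
    rw [← Real.log_div (hf (k + 1)).ne' (hf k).ne']
    calc Real.log (f (k + 1) / f k) ≤ f (k + 1) / f k - 1 :=
          Real.log_le_sub_one_of_pos (div_pos (hf _) (hf _))
      _ ≤ nf / 2 / k := by
          rw [succ_div_sub_one hk0 (hf k).ne']
          gcongr
      _ = -(-nf / 2) / k := by ring
  refine (Real.tendsto_exp_atBot.comp hlog).congr fun k ↦ ?_
  exact Real.exp_log (hf k)

theorem add_of_le (hf : ∀ k, 0 < f k) (hg : ∀ k, 0 < g k) (hfu : UniformPolyGrowth f nf)
    (hgu : UniformPolyGrowth g ng) (hle : ng ≤ nf) :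
    UniformPolyGrowth (fun k ↦ f k + g k) nf := by
  set a : ℕ → ℝ := fun k ↦ k * (f (k + 1) - f k) / f k
  set b : ℕ → ℝ := fun k ↦ k * (g (k + 1) - g k) / g k
  set v : ℕ → ℝ := fun k ↦ g k / (f k + g k)
  have hv_nonneg (k : ℕ) : 0 ≤ v k := by have := hf k; have := hg k; positivity
  have hv_le_div (k : ℕ) : v k ≤ g k / f k := by
    have := hf k; have := hg k
    exact div_le_div_of_nonneg_left (by positivity) (hf k) (by linarith)
  have hvanish : Tendsto (fun k ↦ v k * (b k - a k)) atTop (𝓝 0) := by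
    rcases hle.eq_or_lt with heq | hlt
    · have hv_le_one (k : ℕ) : v k ≤ 1 :=
        div_le_one_of_le₀ (by linarith [hf k]) (by linarith [hf k, hg k])
      exact bdd_le_mul_tendsto_zero (.of_forall hv_nonneg) (.of_forall hv_le_one)
        (by simpa [heq] using hgu.sub hfu)
    · have hv : Tendsto v atTop (𝓝 0) :=
        squeeze_zero hv_nonneg hv_le_div <| tendsto_zero_of_neg (fun k ↦ div_pos (hg k) (hf k))
          (div (fun k ↦ (hf k).ne') (fun k ↦ (hg k).ne') hfu hgu) (by linarith)
      simpa using hv.mul (hgu.sub hfu)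
  have hlim := hfu.add hvanish
  rw [add_zero] at hlim
  refine hlim.congr fun k ↦ ?_
  have := hf k; have := hg k
  simp only [a, b, v]
  field_simp
  ring

end UniformPolyGrowth

theorem uniformPolyGrowth_add (f g : ℕ → ℝ) (hf : ∀ k, 0 < f k) (hg : ∀ k, 0 < g k)
    (nf ng : ℝ) (hfu : UniformPolyGrowth f nf) (hgu : UniformPolyGrowth g ng) :
    UniformPolyGrowth (fun k => f k + g k) (max nf ng) := by
  rcases le_total ng nf with hle | hle
  · simpa only [max_eq_left hle] using hfu.add_of_le hf hg hgu hle
  · simpa only [max_eq_right hle, add_comm] using hgu.add_of_le hg hf hfu hle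
end

section
/- Let f : ℕ → ℝ with f(k) > 0 for all k be of uniform polynomial growth with exponent n_f, and let g : ℕ → ℕ with g(k) ≥ 1 for all k be of uniform polynomial growth (as a real-valued function) with exponent n_g. Then the composition f ∘ g is of uniform polynomial growth with exponent n_f · n_g. -/
/-!
Uniform polynomial growth with exponent `n` is equivalent to `k * Δ(log f)(k) → n`, so `log f`
then differs from `n * log` by at most `ε * |log d - log c|` between any `c, d` far enough out.
For `c = g k`, `d = g (k + 1)` we have `k * (log d - log c) → n_g`, and as `g` is integer-valued,
either `d = c` or both are of size at least a multiple of `k`. Hence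
`k * log (f d / f c) → n_f * n_g`, and exponentiating back gives the claim.
-/

open Filter Topology Asymptotics Real

lemma tendsto_nat_mul_comp_of_hasDerivAt {φ : ℝ → ℝ} {a L : ℝ} (hφ : HasDerivAt φ a 0)
    (hφ0 : φ 0 = 0) {x : ℕ → ℝ}
    (hx : Tendsto (fun k : ℕ => (k : ℝ) * x k) atTop (𝓝 L)) :
    Tendsto (fun k : ℕ => (k : ℝ) * φ (x k)) atTop (𝓝 (a * L)) := by
  have hx0 : Tendsto x atTop (𝓝 0) := by
    refine (zero_mul L ▸
      (tendsto_inv_atTop_zero.comp tendsto_natCast_atTop_atTop).mul hx).congr' ?_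
    filter_upwards [eventually_ne_atTop 0] with k hk
    simp [hk]
  have hlin : (fun k => φ (x k) - a * x k) =o[atTop] x := by
    simpa [hφ0, mul_comm, Function.comp_def] using hφ.isLittleO.comp_tendsto hx0
  have herr : Tendsto (fun k : ℕ => (k : ℝ) * (φ (x k) - a * x k)) atTop (𝓝 0) :=
    (isLittleO_one_iff ℝ).1 <|
      ((isBigO_refl (fun k : ℕ => (k : ℝ)) atTop).mul_isLittleO hlin).trans_isBigO
        (hx.isBigO_one ℝ)
  simpa [mul_sub, mul_left_comm] using herr.add (hx.const_mul a)

lemma tendsto_nat_mul_log_iff {r : ℕ → ℝ} (hr : ∀ k, 0 < r k) {L : ℝ} :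
    Tendsto (fun k : ℕ => (k : ℝ) * log (r k)) atTop (𝓝 L) ↔
      Tendsto (fun k : ℕ => (k : ℝ) * (r k - 1)) atTop (𝓝 L) := by
  constructor
  · intro h
    have hexp : HasDerivAt (fun x => exp x - 1) 1 0 := by
      simpa using (hasDerivAt_exp 0).sub_const 1
    simpa [exp_log (hr _)] using tendsto_nat_mul_comp_of_hasDerivAt hexp (by simp) h
  · intro h
    simpa using tendsto_nat_mul_log_one_add_of_tendsto h

lemma tendsto_nat_mul_log_div_iff {u v : ℕ → ℝ} (hu : ∀ k, 0 < u k) (hv : ∀ k, 0 < v k)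
    {L : ℝ} :
    Tendsto (fun k : ℕ => (k : ℝ) * (log (v k) - log (u k))) atTop (𝓝 L) ↔
      Tendsto (fun k : ℕ => (k : ℝ) * (v k - u k) / u k) atTop (𝓝 L) := by
  have hlog : (fun k : ℕ => (k : ℝ) * (log (v k) - log (u k))) =
      fun k : ℕ => (k : ℝ) * log (v k / u k) := by
    funext k; rw [log_div (hv k).ne' (hu k).ne']
  have hdiv : (fun k : ℕ => (k : ℝ) * (v k - u k) / u k) =
      fun k : ℕ => (k : ℝ) * (v k / u k - 1) := by
    funext k; field_simp [(hu k).ne']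
  rw [hlog, hdiv]
  exact tendsto_nat_mul_log_iff fun k => div_pos (hv k) (hu k)

lemma uniformPolyGrowth_iff_log {f : ℕ → ℝ} (hf : ∀ k, 0 < f k) {n : ℝ} :
    UniformPolyGrowth f n ↔
      Tendsto (fun k : ℕ => (k : ℝ) * (log (f (k + 1)) - log (f k))) atTop (𝓝 n) :=
  (tendsto_nat_mul_log_div_iff hf (fun k => hf (k + 1))).symm

lemma tendsto_nat_mul_log_succ_sub_log :
    Tendsto (fun k : ℕ => (k : ℝ) * (log (k + 1 : ℕ) - log k)) atTop (𝓝 1) := by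
  refine (tendsto_nat_mul_log_one_add_of_tendsto (g := fun k : ℕ => (k : ℝ)⁻¹) ?_).congr' ?_
  · refine tendsto_const_nhds.congr' ?_
    filter_upwards [eventually_ne_atTop 0] with k hk
    field_simp
  · filter_upwards [eventually_ne_atTop 0] with k hk
    rw [← log_div (by positivity) (by positivity)]
    congr 2
    field_simp
    push_cast; ring

lemma exists_monotoneOn_Ici_of_tendsto_nat_mul_sub {a : ℕ → ℝ} {L : ℝ} (hL : 0 < L)
    (h : Tendsto (fun k : ℕ => (k : ℝ) * (a (k + 1) - a k)) atTop (𝓝 L)) :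
    ∃ N, MonotoneOn a (Set.Ici N) := by
  obtain ⟨N, hN⟩ := eventually_atTop.1 (h.eventually (lt_mem_nhds hL))
  refine ⟨N, monotoneOn_nat_Ici_of_le_succ fun k hk => ?_⟩
  have := pos_of_mul_pos_right (hN k hk) k.cast_nonneg
  linarith

lemma exists_abs_sub_mul_log_le {F : ℕ → ℝ} {n : ℝ}
    (hF : Tendsto (fun k : ℕ => (k : ℝ) * (F (k + 1) - F k)) atTop (𝓝 n))
    {ε : ℝ} (hε : 0 < ε) :
    ∃ N, ∀ c ≥ N, ∀ d ≥ N,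
      |F d - F c - n * (log d - log c)| ≤ ε * |log d - log c| := by
  have hlog := tendsto_nat_mul_log_succ_sub_log
  obtain ⟨N₁, hlower⟩ := exists_monotoneOn_Ici_of_tendsto_nat_mul_sub
      (a := fun k => F k - (n - ε) * log k) hε <| by
    convert hF.sub (hlog.const_mul (n - ε)) using 2 <;> ring
  obtain ⟨N₂, hupper⟩ := exists_monotoneOn_Ici_of_tendsto_nat_mul_sub
      (a := fun k => (n + ε) * log k - F k) hε <| by
    convert (hlog.const_mul (n + ε)).sub hF using 2 <;> ring
  have key : ∀ c d, max N₁ N₂ ≤ c → c ≤ d →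
      |F d - F c - n * (log d - log c)| ≤ ε * |log d - log c| := by
    intro c d hc hcd
    have h₁ := hlower (le_of_max_le_left hc) (le_of_max_le_left (hc.trans hcd)) hcd
    have h₂ := hupper (le_of_max_le_right hc) (le_of_max_le_right (hc.trans hcd)) hcd
    have hlog : log c ≤ log d := by
      rcases c.eq_zero_or_pos with rfl | hc0
      · simpa using log_natCast_nonneg d
      · exact log_le_log (by positivity) (by exact_mod_cast hcd)
    simp only at h₁ h₂
    rw [abs_of_nonneg (sub_nonneg.2 hlog), abs_le]
    constructor <;> linarith
  refine ⟨max N₁ N₂, fun c hc d hd => ?_⟩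
  rcases le_total c d with hcd | hdc
  · exact key c d hc hcd
  · have := key d c hd hdc
    rw [← abs_neg, abs_sub_comm (log d)]
    convert this using 2; ring

lemma tendsto_nat_mul_sub_comp {F : ℕ → ℝ} {n : ℝ}
    (hF : Tendsto (fun k : ℕ => (k : ℝ) * (F (k + 1) - F k)) atTop (𝓝 n)) {c d : ℕ → ℕ}
    (hcd : ∀ N, ∀ᶠ k in atTop, d k ≠ c k → N ≤ c k ∧ N ≤ d k) {L : ℝ}
    (hL : Tendsto (fun k : ℕ => (k : ℝ) * (log (d k) - log (c k))) atTop (𝓝 L)) :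
    Tendsto (fun k : ℕ => (k : ℝ) * (F (d k) - F (c k))) atTop (𝓝 (n * L)) := by
  have herr : (fun k : ℕ =>
        (k : ℝ) * (F (d k) - F (c k)) - n * ((k : ℝ) * (log (d k) - log (c k))))
      =o[atTop] fun k : ℕ => (k : ℝ) * (log (d k) - log (c k)) := by
    refine IsLittleO.of_bound fun ε hε => ?_
    obtain ⟨N, hN⟩ := exists_abs_sub_mul_log_le hF hε
    filter_upwards [hcd N] with k hk
    by_cases h : d k = c k
    · simp [h]
    obtain ⟨hc, hd⟩ := hk h
    simp only [norm_eq_abs, abs_mul, Nat.abs_cast]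
    calc |(k : ℝ) * (F (d k) - F (c k)) - n * ((k : ℝ) * (log (d k) - log (c k)))|
        = k * |F (d k) - F (c k) - n * (log (d k) - log (c k))| := by
          rw [mul_left_comm n, ← mul_sub, abs_mul, Nat.abs_cast]
      _ ≤ k * (ε * |log (d k) - log (c k)|) := by gcongr; exact hN _ hc _ hd
      _ = ε * (k * |log (d k) - log (c k)|) := by ring
  have hlim := (isLittleO_one_iff ℝ).1 (herr.trans_isBigO (hL.isBigO_one ℝ))
  simpa using hlim.add (hL.const_mul n)

lemma eventually_le_of_ne_of_tendsto {c d : ℕ → ℕ} (hc : ∀ k, 0 < c k) {L : ℝ}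
    (h : Tendsto (fun k : ℕ => (k : ℝ) * ((d k : ℝ) - c k) / c k) atTop (𝓝 L)) (N : ℕ) :
    ∀ᶠ k in atTop, d k ≠ c k → N ≤ c k := by
  set B := |L| + 1
  have hB : 0 < B := by positivity
  filter_upwards [h.abs.eventually_le_const (lt_add_one |L|),
    tendsto_natCast_atTop_atTop.eventually_ge_atTop (B * N)] with k hbound hk hne
  have hc' : (0 : ℝ) < c k := by exact_mod_cast hc k
  have hgap : (1 : ℝ) ≤ |(d k : ℝ) - c k| := by
    have : (d k : ℤ) ≠ c k := by exact_mod_cast hne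
    exact_mod_cast Int.one_le_abs (sub_ne_zero.2 this)
  have : B * N ≤ B * c k := calc
    B * N ≤ k := hk
    _ ≤ k * |(d k : ℝ) - c k| := le_mul_of_one_le_right k.cast_nonneg hgap
    _ = |(k : ℝ) * ((d k : ℝ) - c k) / c k| * c k := by
      rw [abs_div, abs_mul, Nat.abs_cast, abs_of_pos hc']; field_simp
    _ ≤ B * c k := by gcongr
  exact_mod_cast le_of_mul_le_mul_left this hB

lemma eventually_le_and_le_of_ne {c d : ℕ → ℕ} (hc : ∀ k, 0 < c k) (hd : ∀ k, 0 < d k)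
    {L : ℝ}
    (hL : Tendsto (fun k : ℕ => (k : ℝ) * (log (d k) - log (c k))) atTop (𝓝 L)) (N : ℕ) :
    ∀ᶠ k in atTop, d k ≠ c k → N ≤ c k ∧ N ≤ d k := by
  have hc' : ∀ k, (0 : ℝ) < c k := fun k => by exact_mod_cast hc k
  have hd' : ∀ k, (0 : ℝ) < d k := fun k => by exact_mod_cast hd k
  have hL' : Tendsto (fun k : ℕ => (k : ℝ) * (log (c k) - log (d k))) atTop (𝓝 (-L)) := by
    simpa [mul_sub] using hL.neg
  filter_upwards
    [eventually_le_of_ne_of_tendsto hc ((tendsto_nat_mul_log_div_iff hc' hd').1 hL) N,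
      eventually_le_of_ne_of_tendsto hd ((tendsto_nat_mul_log_div_iff hd' hc').1 hL') N]
    with k hcN hdN hne
  exact ⟨hcN hne, hdN (Ne.symm hne)⟩

theorem uniformPolyGrowth_comp (f : ℕ → ℝ) (hf : ∀ k, 0 < f k)
    (g : ℕ → ℕ) (hg : ∀ k, 1 ≤ g k)
    (nf ng : ℝ) (hfu : UniformPolyGrowth f nf)
    (hgu : UniformPolyGrowth (fun k => (g k : ℝ)) ng) :
    UniformPolyGrowth (fun k => f (g k)) (nf * ng) := by
  have hgR : ∀ k, (0 : ℝ) < g k := fun k => by exact_mod_cast hg k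
  have hlog_g :
      Tendsto (fun k : ℕ => (k : ℝ) * (log (g (k + 1)) - log (g k))) atTop (𝓝 ng) :=
    (tendsto_nat_mul_log_div_iff hgR fun k => hgR (k + 1)).2 hgu
  have hev : ∀ N, ∀ᶠ k in atTop, g (k + 1) ≠ g k → N ≤ g k ∧ N ≤ g (k + 1) :=
    eventually_le_and_le_of_ne (d := fun k => g (k + 1)) hg (fun k => hg (k + 1)) hlog_g
  have hlog_f := (uniformPolyGrowth_iff_log hf).1 hfu
  exact (uniformPolyGrowth_iff_log fun k => hf (g k)).2 <|
    tendsto_nat_mul_sub_comp (F := fun k => log (f k)) hlog_f hev hlog_g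
end

section
/- Let f : ℕ → ℝ be an unbounded function with f(k) > 0 for all k, and let n > 0 be a real number such that for every ε > 0 there is k₀ ∈ ℕ with k^{n−ε} < f(k) < k^{n+ε} for all k ≥ k₀. Define f⁻¹ : ℕ → ℕ by f⁻¹(m) = min { k ∈ ℕ | f(k) ≥ m } (the minimum exists because f is unbounded). Then for every ε > 0 there is m₀ ∈ ℕ such that m^{1/n − ε} < f⁻¹(m) < m^{1/n + ε} for all m ≥ m₀. -/
/-!
Since `genInv f m` tends to infinity, eventually `f k < k ^ (n + δ)` at `k = genInv f m`, and
`m ≤ f (genInv f m)` gives `m ^ (n + δ)⁻¹ < genInv f m`. Conversely `k = ⌈m ^ (n - δ)⁻¹⌉₊` satisfies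
`m ≤ k ^ (n - δ) < f k`, so `genInv f m ≤ k`. Choosing `δ` small turns `(n ± δ)⁻¹` into `n⁻¹ ∓ ε`,
and the ceiling is absorbed by the slack in the exponent.
-/

/-- The generalized inverse of an unbounded function `f : ℕ → ℝ`:
`f⁻¹(m)` is the least `k` with `f k ≥ m`. -/
noncomputable def genInv (f : ℕ → ℝ) (m : ℕ) : ℕ :=
  sInf {k : ℕ | (m : ℝ) ≤ f k}

open Filter Topology

section genInv

variable {f : ℕ → ℝ}

lemma le_apply_genInv (hunb : ∀ C : ℝ, ∃ k, C < f k) (m : ℕ) : (m : ℝ) ≤ f (genInv f m) :=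
  Nat.sInf_mem (let ⟨k, hk⟩ := hunb m; ⟨k, hk.le⟩)

lemma genInv_le {m k : ℕ} (h : (m : ℝ) ≤ f k) : genInv f m ≤ k :=
  Nat.sInf_le h

lemma tendsto_genInv_atTop (hunb : ∀ C : ℝ, ∃ k, C < f k) : Tendsto (genInv f) atTop atTop := by
  refine tendsto_atTop.2 fun K => ?_
  have hbig : ∀ᶠ m : ℕ in atTop, ∀ k ∈ Finset.range K, f k < m :=
    (Finset.range K).eventually_all.2 fun k _ =>
      tendsto_natCast_atTop_atTop.eventually_gt_atTop (f k)
  filter_upwards [hbig] with m hm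
  by_contra! hlt
  exact (le_apply_genInv hunb m).not_gt (hm _ (Finset.mem_range.2 hlt))

lemma eventually_rpow_inv_lt_genInv (hunb : ∀ C : ℝ, ∃ k, C < f k) {a : ℝ} (ha : 0 < a)
    (h : ∀ᶠ k : ℕ in atTop, f k < (k : ℝ) ^ a) :
    ∀ᶠ m : ℕ in atTop, (m : ℝ) ^ a⁻¹ < genInv f m := by
  filter_upwards [(tendsto_genInv_atTop hunb).eventually h] with m hm
  rw [Real.rpow_inv_lt_iff_of_pos m.cast_nonneg (Nat.cast_nonneg _) ha]
  exact (le_apply_genInv hunb m).trans_lt hm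

lemma eventually_genInv_le_ceil_rpow_inv {b : ℝ} (hb : 0 < b)
    (h : ∀ᶠ k : ℕ in atTop, (k : ℝ) ^ b < f k) :
    ∀ᶠ m : ℕ in atTop, genInv f m ≤ ⌈(m : ℝ) ^ b⁻¹⌉₊ := by
  have hceil : Tendsto (fun m : ℕ => ⌈(m : ℝ) ^ b⁻¹⌉₊) atTop atTop :=
    tendsto_nat_ceil_atTop.comp
      ((tendsto_rpow_atTop (inv_pos.2 hb)).comp tendsto_natCast_atTop_atTop)
  filter_upwards [hceil.eventually h] with m hm
  refine genInv_le (le_of_lt ?_)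
  calc (m : ℝ) = ((m : ℝ) ^ b⁻¹) ^ b := (Real.rpow_inv_rpow m.cast_nonneg hb.ne').symm
    _ ≤ (⌈(m : ℝ) ^ b⁻¹⌉₊ : ℝ) ^ b :=
      Real.rpow_le_rpow (by positivity) (Nat.le_ceil _) hb.le
    _ < f _ := hm

end genInv

lemma eventually_ceil_rpow_lt_rpow {c d : ℝ} (hc : 0 ≤ c) (hcd : c < d) :
    ∀ᶠ x : ℝ in atTop, (⌈x ^ c⌉₊ : ℝ) < x ^ d := by
  filter_upwards [eventually_ge_atTop 1,
    (tendsto_rpow_atTop (sub_pos.2 hcd)).eventually_ge_atTop 2] with x hx1 hx2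
  have hxc : 1 ≤ x ^ c := Real.one_le_rpow hx1 hc
  calc (⌈x ^ c⌉₊ : ℝ) < 2 * x ^ c := Nat.ceil_lt_two_mul (by linarith)
    _ ≤ x ^ (d - c) * x ^ c := by gcongr
    _ = x ^ d := by rw [← Real.rpow_add (by linarith), sub_add_cancel]

lemma exists_pos_inv_add_gt_and_inv_sub_lt {n ε : ℝ} (hn : 0 < n) (hε : 0 < ε) :
    ∃ δ > 0, δ < n ∧ n⁻¹ - ε < (n + δ)⁻¹ ∧ (n - δ)⁻¹ < n⁻¹ + ε := by
  have hadd : Tendsto (fun δ : ℝ => (n + δ)⁻¹) (𝓝 0) (𝓝 n⁻¹) := by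
    have : ContinuousAt (fun δ : ℝ => (n + δ)⁻¹) 0 := by
      fun_prop (disch := simpa using hn.ne')
    simpa using this.tendsto
  have hsub : Tendsto (fun δ : ℝ => (n - δ)⁻¹) (𝓝 0) (𝓝 n⁻¹) := by
    have : ContinuousAt (fun δ : ℝ => (n - δ)⁻¹) 0 := by
      fun_prop (disch := simpa using hn.ne')
    simpa using this.tendsto
  have hnear : ∀ᶠ δ in 𝓝 (0 : ℝ), δ < n ∧ n⁻¹ - ε < (n + δ)⁻¹ ∧ (n - δ)⁻¹ < n⁻¹ + ε :=
    (eventually_lt_nhds hn).and <|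
      (hadd.eventually (lt_mem_nhds (by linarith))).and
        (hsub.eventually (gt_mem_nhds (by linarith)))
  obtain ⟨δ, hδ, hδpos⟩ := ((hnear.filter_mono nhdsWithin_le_nhds).and
    (self_mem_nhdsWithin : ∀ᶠ δ in 𝓝[>] (0 : ℝ), 0 < δ)).exists
  exact ⟨δ, hδpos, hδ⟩

theorem genInv_polynomial_growth_general (f : ℕ → ℝ)
    (hunb : ∀ C : ℝ, ∃ k, C < f k) (n : ℝ) (hn : 0 < n)
    (hgrow : ∀ ε : ℝ, 0 < ε → ∃ k₀ : ℕ, ∀ k ≥ k₀,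
      (k : ℝ) ^ (n - ε) < f k ∧ f k < (k : ℝ) ^ (n + ε)) :
    ∀ ε : ℝ, 0 < ε → ∃ m₀ : ℕ, ∀ m ≥ m₀,
      (m : ℝ) ^ (1 / n - ε) < (genInv f m : ℝ) ∧
      (genInv f m : ℝ) < (m : ℝ) ^ (1 / n + ε) := by
  intro ε hε
  obtain ⟨δ, hδ, hδn, hlow, hhigh⟩ := exists_pos_inv_add_gt_and_inv_sub_lt hn hε
  have hf := eventually_atTop.2 (hgrow δ hδ)
  have hlower := eventually_rpow_inv_lt_genInv hunb (by linarith) (hf.mono fun _ h => h.2)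
  have hupper := eventually_genInv_le_ceil_rpow_inv (sub_pos.2 hδn) (hf.mono fun _ h => h.1)
  have hceil := tendsto_natCast_atTop_atTop.eventually
    (eventually_ceil_rpow_lt_rpow (inv_pos.2 (sub_pos.2 hδn)).le hhigh)
  refine eventually_atTop.1 ?_
  filter_upwards [hlower, hupper, hceil, eventually_ge_atTop 1] with m hlo hup hc hm
  rw [one_div]
  exact ⟨(Real.rpow_le_rpow_of_exponent_le (by exact_mod_cast hm) hlow.le).trans_lt hlo,
    (Nat.cast_le.2 hup).trans_lt hc⟩

theorem genInv_polynomial_growth (f : ℕ → ℝ) (hpos : ∀ k, 0 < f k)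
    (hunb : ∀ C : ℝ, ∃ k, C < f k) (n : ℝ) (hn : 0 < n)
    (hgrow : ∀ ε : ℝ, 0 < ε → ∃ k₀ : ℕ, ∀ k ≥ k₀,
      (k : ℝ) ^ (n - ε) < f k ∧ f k < (k : ℝ) ^ (n + ε)) :
    ∀ ε : ℝ, 0 < ε → ∃ m₀ : ℕ, ∀ m ≥ m₀,
      (m : ℝ) ^ (1 / n - ε) < (genInv f m : ℝ) ∧
      (genInv f m : ℝ) < (m : ℝ) ^ (1 / n + ε) :=
  genInv_polynomial_growth_general f hunb n hn hgrow
end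

section
/- Let f : ℕ → ℝ be a function with f(k) > 0 for all k, of uniform polynomial growth with exponent n_f. Then for every ε > 0 there is k₀ ∈ ℕ such that k^{n_f − ε} < f(k) < k^{n_f + ε} for every k ≥ k₀. -/
open Filter Real Topology Asymptotics

theorem tendsto_natCast_mul_log_one_add_of_tendsto {g : ℕ → ℝ} {t : ℝ}
    (hg : Tendsto (fun n : ℕ => n * g n) atTop (𝓝 t)) :
    Tendsto (fun n : ℕ => n * log (1 + g n)) atTop (𝓝 t) :=
  (tendsto_mul_log_one_add_of_tendsto (tendsto_smul_comp_nat_floor_of_tendsto_mul hg)).comp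
    tendsto_natCast_atTop_atTop |>.congr (by simp)

theorem tendsto_div_of_tendsto_sub_div_sub {a b : ℕ → ℝ} {L : ℝ} (hb : Monotone b)
    (hb_strict : ∀ᶠ k in atTop, b k < b (k + 1)) (hb_top : Tendsto b atTop atTop)
    (h : Tendsto (fun k => (a (k + 1) - a k) / (b (k + 1) - b k)) atTop (𝓝 L)) :
    Tendsto (fun k => a k / b k) atTop (𝓝 L) := by
  have hstep : (fun k => (a (k + 1) - L * b (k + 1)) - (a k - L * b k)) =o[atTop]
      fun k => b (k + 1) - b k := by
    rw [isLittleO_iff_tendsto' (hb_strict.mono fun k hk h0 => by linarith)]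
    refine (tendsto_sub_nhds_zero_iff.2 h).congr' ?_
    filter_upwards [hb_strict] with k hk
    have : b (k + 1) - b k ≠ 0 := by linarith
    field_simp
    ring
  have hb_top' : Tendsto (fun k => b k - b 0) atTop atTop :=
    tendsto_atTop_add_const_right _ _ hb_top
  -- The increments of `a - L * b` are `o` of those of `b`, hence so are their telescoping sums.
  have hsum := hstep.sum_range (fun k => sub_nonneg.2 (hb k.le_succ))
    (by simpa only [Finset.sum_range_sub] using hb_top')
  simp only [Finset.sum_range_sub (fun k => a k - L * b k), Finset.sum_range_sub b] at hsum
  have hconst : ∀ c : ℝ, (fun _ : ℕ => c) =o[atTop] b := fun c =>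
    isLittleO_const_left.2 (Or.inr (tendsto_norm_atTop_atTop.comp hb_top))
  have hmain : (fun k => a k - L * b k) =o[atTop] b :=
    ((hsum.trans_isBigO ((isBigO_refl b atTop).sub (hconst (b 0)).isBigO)).add
      (hconst (a 0 - L * b 0))).congr (fun k => by ring) fun _ => rfl
  refine tendsto_sub_nhds_zero_iff.1 (hmain.tendsto_div_nhds_zero.congr' ?_)
  filter_upwards [hb_top.eventually_gt_atTop 0] with k hk
  field_simp

theorem UniformPolyGrowth.tendsto_logb {f : ℕ → ℝ} {n : ℝ} (hf : ∀ k, 0 < f k)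
    (h : UniformPolyGrowth f n) : Tendsto (fun k : ℕ => logb k (f k)) atTop (𝓝 n) := by
  have hnum : Tendsto (fun k : ℕ => k * log (1 + (f (k + 1) - f k) / f k)) atTop (𝓝 n) :=
    tendsto_natCast_mul_log_one_add_of_tendsto <| by
      simpa only [UniformPolyGrowth, mul_div_assoc] using h
  have hden : Tendsto (fun k : ℕ => k * log (1 + 1 / k)) atTop (𝓝 1) :=
    (tendsto_mul_log_one_add_div_atTop 1).comp tendsto_natCast_atTop_atTop
  have hlog_mono : Monotone fun k : ℕ => log k := by
    intro i j hij
    rcases i.eq_zero_or_pos with rfl | hi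
    · simpa using log_natCast_nonneg j
    · exact log_le_log (by exact_mod_cast hi) (by exact_mod_cast hij)
  refine tendsto_div_of_tendsto_sub_div_sub hlog_mono ?_
    (tendsto_log_atTop.comp tendsto_natCast_atTop_atTop) ?_
  · filter_upwards [eventually_gt_atTop 0] with k hk
    push_cast
    exact log_lt_log (by exact_mod_cast hk) (by linarith)
  · have hratio := hnum.div hden one_ne_zero
    rw [div_one] at hratio
    refine hratio.congr' ?_
    filter_upwards [eventually_gt_atTop 0] with k hk
    have hk' : (0 : ℝ) < k := by exact_mod_cast hk
    have hfk : f k ≠ 0 := (hf k).ne'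
    rw [Pi.div_apply, mul_div_mul_left _ _ hk'.ne', ← log_div (hf _).ne' hfk,
      ← log_div (by positivity) hk'.ne']
    congr 2 <;> field_simp <;> push_cast <;> ring

theorem uniformPolyGrowth_bounds (f : ℕ → ℝ) (hf : ∀ k, 0 < f k)
    (nf : ℝ) (hfu : UniformPolyGrowth f nf) :
    ∀ ε : ℝ, 0 < ε → ∃ k₀ : ℕ, ∀ k ≥ k₀,
      (k : ℝ) ^ (nf - ε) < f k ∧ f k < (k : ℝ) ^ (nf + ε) := by
  intro ε hε
  have hlogb := (hfu.tendsto_logb hf).eventually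
    (Ioo_mem_nhds (sub_lt_self nf hε) (lt_add_of_pos_right nf hε))
  obtain ⟨k₀, hk₀⟩ := eventually_atTop.1 (hlogb.and (eventually_gt_atTop 1))
  refine ⟨k₀, fun k hk => ?_⟩
  obtain ⟨⟨hlower, hupper⟩, hk1⟩ := hk₀ k hk
  have hk1' : (1 : ℝ) < k := by exact_mod_cast hk1
  exact ⟨(lt_logb_iff_rpow_lt hk1' (hf k)).1 hlower, (logb_lt_iff_lt_rpow hk1' (hf k)).1 hupper⟩
end

section
/- Let K be a field, A ⊆ K a subring, and P ∈ A a nonzero element. Let ∂⁽¹⁾, …, ∂⁽ᴿ⁾ : K → K be derivations (not necessarily distinct or commuting) such that P·∂⁽ʲ⁾(a) ∈ A for every a ∈ A and every j. Then for every S ≥ 1, every choice of S derivations from this family, and every a ∈ A, one has P^{2S−1} · (∂^{(j₁)} ∘ ⋯ ∘ ∂^{(j_S)})(a) ∈ A. In particular, each iterated derivative of an element of A is an element of A divided by an odd power of the fixed denominator P. -/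
/-! Multiplying `P ^ m * x` by `P ^ 2` before differentiating absorbs both the new denominator
of `D x` and the one of `D (P ^ m) = m P ^ (m - 1) D P`:
`P ^ (m + 2) * D x = P * (P * D (P ^ m * x)) - m • (P ^ m * x) * (P * D P)`.
So each further derivation costs two powers of `P`, and the first one costs a single power. -/

namespace Derivation

variable {R K : Type*} [CommSemiring R] [CommRing K] [Algebra R K]

theorem sq_mul_apply_pow_mul (D : Derivation R K K) (P x : K) (m : ℕ) :
    P ^ 2 * D (P ^ m * x) = P ^ (m + 2) * D x + m • (P ^ m * x * (P * D P)) := by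
  rw [leibniz, leibniz_pow, smul_eq_mul, smul_eq_mul, smul_eq_mul, nsmul_eq_mul, nsmul_eq_mul]
  cases m with
  | zero => simp
  | succ k => simp only [Nat.add_sub_cancel]; ring

variable {A : Subring K} {P : K}

theorem pow_add_two_mul_apply_mem (D : Derivation R K K) (hPA : P ∈ A)
    (hD : ∀ a ∈ A, P * D a ∈ A) {x : K} {m : ℕ} (hx : P ^ m * x ∈ A) :
    P ^ (m + 2) * D x ∈ A := by
  have hsplit : P ^ (m + 2) * D x = P * (P * D (P ^ m * x)) - m • (P ^ m * x * (P * D P)) := by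
    rw [← mul_assoc, ← sq, sq_mul_apply_pow_mul, add_sub_cancel_right]
  rw [hsplit]
  exact sub_mem (A.mul_mem hPA (hD _ hx)) (nsmul_mem (A.mul_mem hx (hD P hPA)) m)

theorem pow_mul_apply_foldr_mem {ι : Type*} (D : ι → Derivation R K K) (hPA : P ∈ A)
    (hD : ∀ j, ∀ a ∈ A, P * D j a ∈ A) {a : K} (ha : a ∈ A) (j : ι) (l : List ι) :
    P ^ (2 * l.length + 1) * D j (l.foldr (fun i x => D i x) a) ∈ A := by
  induction l generalizing j with
  | nil => simpa using hD j a ha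
  | cons i l ih => exact pow_add_two_mul_apply_mem (D j) hPA (hD j) (ih i)

end Derivation

theorem iterated_derivative_denominator_general {K : Type*} [Field K] (A : Subring K)
    (P : K) (hPA : P ∈ A)
    {ι : Type*} (D : ι → Derivation ℤ K K)
    (hD : ∀ j : ι, ∀ a ∈ A, P * D j a ∈ A) :
    ∀ l : List ι, l ≠ [] → ∀ a ∈ A,
      P ^ (2 * l.length - 1) * (l.foldr (fun j x => D j x) a) ∈ A := by
  rintro (_ | ⟨j, l⟩) hl a ha
  · exact absurd rfl hl
  · have hexp : 2 * (j :: l).length - 1 = 2 * l.length + 1 := by simp; omega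
    rw [hexp, List.foldr_cons]
    exact Derivation.pow_mul_apply_foldr_mem D hPA hD ha j l

/-- If every first derivative (with respect to a family of derivations) of an
element of the subring `A` lies in `P⁻¹ • A`, then every `S`-fold iterated
derivative of an element of `A` lies in `P^(2S-1)⁻¹ • A`. -/
theorem iterated_derivative_denominator {K : Type*} [Field K] (A : Subring K)
    (P : K) (hPA : P ∈ A) (hP0 : P ≠ 0)
    {ι : Type*} (D : ι → Derivation ℤ K K)
    (hD : ∀ j : ι, ∀ a ∈ A, P * D j a ∈ A) :
    ∀ l : List ι, l ≠ [] → ∀ a ∈ A,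
      P ^ (2 * l.length - 1) * (l.foldr (fun j x => D j x) a) ∈ A :=
  iterated_derivative_denominator_general A P hPA D hD
end

section
/- Let E be an inner product space over ℂ, F ⊆ E a subspace, and let x = u + w₁ and y = v + w₂ be unit vectors in E, where u, v ∈ F and w₁, w₂ are orthogonal to F. Then ‖u‖²‖v‖² − |⟨u,v⟩|² ≤ 1 − |⟨x,y⟩|². Equivalently, when u and v are nonzero, ‖u‖·‖v‖·|[u],[v]| ≤ |[x],[y]| in the Fubini–Study distance; that is, the projective distance between the orthogonal projections of two projective points onto ℙ(F) drops by at most the product of the distances of the two points from ℙ(F^⊥). -/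
/-!
For `x = u + w₁`, `y = v + w₂`, orthogonality gives `⟨x, y⟩ = ⟨u, v⟩ + ⟨w₁, w₂⟩`,
`‖x‖² = ‖u‖² + ‖w₁‖²` and `‖y‖² = ‖v‖² + ‖w₂‖²`. With `a, b, c, d` the norms of
`u, v, w₁, w₂` and `p = |⟨u, v⟩| ≤ ab`, the triangle inequality bounds `|⟨x, y⟩|` by `p + cd`,
and the Gram determinant of `x, y` exceeds that of `u, v` by at least
`a²d² + b²c² - 2pcd ≥ (ad - bc)² ≥ 0`.
-/

open scoped InnerProductSpace

lemma sq_mul_sq_sub_sq_le_of_le_add {a b c d p r : ℝ} (hc : 0 ≤ c) (hd : 0 ≤ d) (hr : 0 ≤ r)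
    (hpab : p ≤ a * b) (hrp : r ≤ p + c * d) :
    a ^ 2 * b ^ 2 - p ^ 2 ≤ (a ^ 2 + c ^ 2) * (b ^ 2 + d ^ 2) - r ^ 2 := by
  have hr_sq : r ^ 2 ≤ (p + c * d) ^ 2 := pow_le_pow_left₀ hr hrp 2
  have hpcd : p * (c * d) ≤ a * b * (c * d) := mul_le_mul_of_nonneg_right hpab (by positivity)
  nlinarith [sq_nonneg (a * d - b * c)]

section Orthogonal

variable {𝕜 E : Type*} [RCLike 𝕜] [NormedAddCommGroup E] [InnerProductSpace 𝕜 E]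
  {F : Submodule 𝕜 E} {u v w₁ w₂ : E}

lemma Submodule.inner_add_add_of_mem_orthogonal (hu : u ∈ F) (hv : v ∈ F) (hw₁ : w₁ ∈ Fᗮ)
    (hw₂ : w₂ ∈ Fᗮ) : ⟪u + w₁, v + w₂⟫_𝕜 = ⟪u, v⟫_𝕜 + ⟪w₁, w₂⟫_𝕜 := by
  rw [inner_add_left, inner_add_right, inner_add_right,
    F.inner_right_of_mem_orthogonal hu hw₂, F.inner_left_of_mem_orthogonal hv hw₁]
  ring

lemma Submodule.norm_add_sq_of_mem_orthogonal (hu : u ∈ F) (hw : w₁ ∈ Fᗮ) :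
    ‖u + w₁‖ ^ 2 = ‖u‖ ^ 2 + ‖w₁‖ ^ 2 := by
  simpa only [sq] using
    norm_add_sq_eq_norm_sq_add_norm_sq_of_inner_eq_zero u w₁ (F.inner_right_of_mem_orthogonal hu hw)

theorem Submodule.gram_le_of_mem_orthogonal (hu : u ∈ F) (hv : v ∈ F) (hw₁ : w₁ ∈ Fᗮ)
    (hw₂ : w₂ ∈ Fᗮ) :
    ‖u‖ ^ 2 * ‖v‖ ^ 2 - ‖⟪u, v⟫_𝕜‖ ^ 2 ≤
      ‖u + w₁‖ ^ 2 * ‖v + w₂‖ ^ 2 - ‖⟪u + w₁, v + w₂⟫_𝕜‖ ^ 2 := by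
  rw [F.norm_add_sq_of_mem_orthogonal hu hw₁, F.norm_add_sq_of_mem_orthogonal hv hw₂]
  refine sq_mul_sq_sub_sq_le_of_le_add (norm_nonneg _) (norm_nonneg _) (norm_nonneg _)
    (norm_inner_le_norm u v) ?_
  rw [F.inner_add_add_of_mem_orthogonal hu hv hw₁ hw₂]
  exact (norm_add_le _ _).trans (by gcongr; exact norm_inner_le_norm w₁ w₂)

end Orthogonal

/-- Projection onto a subspace decreases the Fubini–Study distance by at most
the product of the distances from the orthogonal complement: for unit vectors
`x = u + w₁`, `y = v + w₂` with `u, v ∈ F` and `w₁, w₂ ⊥ F`,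
`‖u‖²‖v‖² - |⟨u,v⟩|² ≤ 1 - |⟨x,y⟩|²`. -/
theorem fubiniStudy_projection_estimate {E : Type*} [NormedAddCommGroup E]
    [InnerProductSpace ℂ E] (F : Submodule ℂ E) (u v w₁ w₂ : E)
    (hu : u ∈ F) (hv : v ∈ F) (hw₁ : w₁ ∈ Fᗮ) (hw₂ : w₂ ∈ Fᗮ)
    (hx : ‖u + w₁‖ = 1) (hy : ‖v + w₂‖ = 1) :
    ‖u‖ ^ 2 * ‖v‖ ^ 2 - ‖(inner ℂ u v : ℂ)‖ ^ 2 ≤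
      1 - ‖(inner ℂ (u + w₁) (v + w₂) : ℂ)‖ ^ 2 := by
  simpa only [hx, hy, one_pow, one_mul] using F.gram_le_of_mem_orthogonal hu hv hw₁ hw₂
end
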